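/- arXiv:2603.23433 — 3 statements merged into one kernel-verified Lean document; each statement's English description precedes it below -/
import Mathlib

section
/- Let V_all be the set of all strictly positive predictors f : Option 𝒳 → PMF 𝒴. Then the V_all-information reduces to the Shannon mutual information: I_{V_all}(X → Y) = H(Y) - H(Y ∣ X) = I(X; Y), where H(Y), H(Y ∣ X) are the Shannon entropy and conditional entropy (base 2) of the finite-valued random variables Y and (X, Y). -/
open MeasureTheory

/-- A predictor is strictly positive if it assigns positive probability to every
outcome, for every (possibly null) input. -/
def StrictlyPositive {𝒳 𝒴 : Type*} (f : Option 𝒳 → PMF 𝒴) : Prop :=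
  ∀ (z : Option 𝒳) (y : 𝒴), 0 < (f z) y

/-- The `V`-entropy `H_V(Y)`: infimum over `f ∈ V` of the expected null log-loss. -/
noncomputable def nullVEntropy {Ω 𝒳 𝒴 : Type*} [MeasurableSpace Ω]
    (μ : Measure Ω) (Y : Ω → 𝒴) (V : Set (Option 𝒳 → PMF 𝒴)) : ℝ :=
  ⨅ f : V, ∫ ω, -Real.logb 2 ((f.1 none) (Y ω)).toReal ∂μ

/-- The conditional `V`-entropy `H_V(Y ∣ Z)`. -/
noncomputable def condVEntropy {Ω 𝒳 𝒴 : Type*} [MeasurableSpace Ω]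
    (μ : Measure Ω) (Y : Ω → 𝒴) (V : Set (Option 𝒳 → PMF 𝒴)) (Z : Ω → 𝒳) : ℝ :=
  ⨅ f : V, ∫ ω, -Real.logb 2 ((f.1 (some (Z ω))) (Y ω)).toReal ∂μ

/-- The `V`-information `I_V(Z → Y) = H_V(Y) - H_V(Y ∣ Z)`. -/
noncomputable def VInfo {Ω 𝒳 𝒴 : Type*} [MeasurableSpace Ω]
    (μ : Measure Ω) (Y : Ω → 𝒴) (V : Set (Option 𝒳 → PMF 𝒴)) (Z : Ω → 𝒳) : ℝ :=
  nullVEntropy μ Y V - condVEntropy μ Y V Z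

/-- Shannon entropy (base 2) of a finite-valued random variable:
`H(Y) = -∑_y μ{Y = y} · log₂ μ{Y = y}` (zero-probability summands vanish). -/
noncomputable def shannonEntropy {Ω 𝒴 : Type*} [MeasurableSpace Ω] [Fintype 𝒴]
    (μ : MeasureTheory.Measure Ω) (Y : Ω → 𝒴) : ℝ :=
  -∑ y : 𝒴, (μ {ω | Y ω = y}).toReal * Real.logb 2 (μ {ω | Y ω = y}).toReal

/-- Shannon conditional entropy (base 2):
`H(Y ∣ X) = -∑_x ∑_y μ{X = x ∧ Y = y} · log₂ (μ{X = x ∧ Y = y} / μ{X = x})`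
(zero-probability summands vanish, since the factor `μ{X = x ∧ Y = y}` is `0`). -/
noncomputable def shannonCondEntropy {Ω 𝒳 𝒴 : Type*} [MeasurableSpace Ω]
    [Fintype 𝒳] [Fintype 𝒴] (μ : MeasureTheory.Measure Ω) (X : Ω → 𝒳) (Y : Ω → 𝒴) : ℝ :=
  -∑ x : 𝒳, ∑ y : 𝒴, (μ {ω | X ω = x ∧ Y ω = y}).toReal *
    Real.logb 2 ((μ {ω | X ω = x ∧ Y ω = y}).toReal / (μ {ω | X ω = x}).toReal)

section Helpers

/-- Gibbs' inequality. -/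
private lemma gibbs_aux {α : Type*} [Fintype α] (p q : α → ℝ)
    (hp : ∀ a, 0 ≤ p a) (hps : ∑ a, p a = 1)
    (hq : ∀ a, 0 < q a) (hqs : ∑ a, q a ≤ 1) :
    ∑ a, p a * (-Real.logb 2 (p a)) ≤ ∑ a, p a * (-Real.logb 2 (q a)) := by
  have key : ∀ a, p a - q a ≤ p a * (Real.log (p a) - Real.log (q a)) := by
    intro a
    rcases eq_or_lt_of_le (hp a) with h | h
    · rw [← h]; simpa using (hq a).le
    · have hlog : Real.log (q a / p a) ≤ q a / p a - 1 :=
        Real.log_le_sub_one_of_pos (div_pos (hq a) h)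
      rw [Real.log_div (hq a).ne' h.ne'] at hlog
      have h2 := mul_le_mul_of_nonneg_left hlog h.le
      rw [mul_sub, mul_sub, mul_div_cancel₀ _ h.ne', mul_one] at h2
      linarith
  have hsum : 0 ≤ ∑ a, p a * (Real.log (p a) - Real.log (q a)) := by
    have h1 : ∑ a, (p a - q a) ≤ ∑ a, p a * (Real.log (p a) - Real.log (q a)) :=
      Finset.sum_le_sum fun a _ => key a
    rw [Finset.sum_sub_distrib, hps] at h1
    linarith
  have hlog2 : (0:ℝ) < Real.log 2 := Real.log_pos one_lt_two
  have hterm : ∀ a, p a * (-Real.logb 2 (q a)) - p a * (-Real.logb 2 (p a))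
      = (p a * (Real.log (p a) - Real.log (q a))) / Real.log 2 := by
    intro a; simp only [Real.logb]; ring
  have : 0 ≤ ∑ a, (p a * (-Real.logb 2 (q a)) - p a * (-Real.logb 2 (p a))) := by
    simp only [hterm, ← Finset.sum_div]
    positivity
  rw [Finset.sum_sub_distrib] at this
  linarith

private lemma integral_comp_fintype {Ω α : Type*} [MeasurableSpace Ω] [Fintype α]
    [MeasurableSpace α] [MeasurableSingletonClass α]
    (μ : Measure Ω) [IsFiniteMeasure μ] (T : Ω → α) (hT : Measurable T) (g : α → ℝ) :
    ∫ ω, g (T ω) ∂μ = ∑ a, (μ {ω | T ω = a}).toReal * g a := by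
  have hg : Measurable g := measurable_of_countable g
  rw [← integral_map hT.aemeasurable hg.aestronglyMeasurable,
    integral_fintype _]
  refine Finset.sum_congr rfl fun a _ => ?_
  rw [Measure.real, Measure.map_apply hT (measurableSet_singleton a), smul_eq_mul]
  congr 1
  exact Integrable.of_finite

private lemma pmf_sum_toReal_eq_one {α : Type*} [Fintype α] (q : PMF α) :
    ∑ a, (q a).toReal = 1 := by
  have h := q.tsum_coe
  rw [tsum_fintype] at h
  rw [← ENNReal.toReal_sum (fun a _ => q.apply_ne_top a), h, ENNReal.toReal_one]

/-- A strictly positive mixture PMF `(1-ε)·p + ε·uniform`. -/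
noncomputable def mixPMF {α : Type*} [Fintype α] [Nonempty α] (p : α → ℝ) (ε : ℝ)
    (hp : ∀ a, 0 ≤ p a) (hps : ∑ a, p a = 1) (hε0 : 0 < ε) (hε1 : ε < 1) : PMF α :=
  PMF.ofFintype (fun a => ENNReal.ofReal ((1 - ε) * p a + ε / Fintype.card α)) (by
    have hcard : (0:ℝ) < Fintype.card α := by
      exact_mod_cast Fintype.card_pos
    rw [← ENNReal.ofReal_sum_of_nonneg (fun a _ => add_nonneg (mul_nonneg (by linarith) (hp a)) (div_nonneg hε0.le hcard.le))]
    rw [Finset.sum_add_distrib, ← Finset.mul_sum, hps, Finset.sum_const,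
      Finset.card_univ, nsmul_eq_mul, mul_div_cancel₀ _ hcard.ne']
    norm_num)

private lemma mixPMF_toReal {α : Type*} [Fintype α] [Nonempty α] (p : α → ℝ) (ε : ℝ)
    (hp : ∀ a, 0 ≤ p a) (hps : ∑ a, p a = 1) (hε0 : 0 < ε) (hε1 : ε < 1) (a : α) :
    ((mixPMF p ε hp hps hε0 hε1) a).toReal = (1 - ε) * p a + ε / Fintype.card α := by
  have hcard : (0:ℝ) < Fintype.card α := by exact_mod_cast Fintype.card_pos
  have h1 : (0:ℝ) ≤ (1 - ε) * p a + ε / Fintype.card α :=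
    add_nonneg (mul_nonneg (by linarith) (hp a)) (div_nonneg hε0.le hcard.le)
  simp [mixPMF, PMF.ofFintype_apply, ENNReal.toReal_ofReal h1]

private lemma mixPMF_pos {α : Type*} [Fintype α] [Nonempty α] (p : α → ℝ) (ε : ℝ)
    (hp : ∀ a, 0 ≤ p a) (hps : ∑ a, p a = 1) (hε0 : 0 < ε) (hε1 : ε < 1) (a : α) :
    0 < (mixPMF p ε hp hps hε0 hε1) a := by
  have hcard : (0:ℝ) < Fintype.card α := by exact_mod_cast Fintype.card_pos
  have h1 : (0:ℝ) < (1 - ε) * p a + ε / Fintype.card α := by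
    have h2 : (0:ℝ) ≤ (1 - ε) * p a := mul_nonneg (by linarith) (hp a)
    have h3 : (0:ℝ) < ε / Fintype.card α := by positivity
    linarith
  simpa [mixPMF, PMF.ofFintype_apply] using ENNReal.ofReal_pos.2 h1

private lemma ciInf_eq_of_bounds {ι : Sort*} [Nonempty ι] (g : ι → ℝ) (c : ℝ)
    (hlb : ∀ i, c ≤ g i) (hub : ∀ δ : ℝ, 0 < δ → ∃ i, g i ≤ c + δ) :
    ⨅ i, g i = c := by
  refine le_antisymm ?_ (le_ciInf hlb)
  refine le_of_forall_pos_le_add fun δ hδ => ?_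
  obtain ⟨i, hi⟩ := hub δ hδ
  exact (ciInf_le ⟨c, by rintro _ ⟨i, rfl⟩; exact hlb i⟩ i).trans hi

private lemma pos_toReal {α : Type*} (q : PMF α) (a : α) (h : 0 < q a) :
    0 < (q a).toReal :=
  ENNReal.toReal_pos h.ne' (q.apply_ne_top a)

private lemma eps_choice (δ : ℝ) (hδ : 0 < δ) :
    ∃ ε : ℝ, 0 < ε ∧ ε < 1 ∧ Real.logb 2 (1 - ε) = -δ := by
  refine ⟨1 - (2:ℝ) ^ (-δ), ?_, ?_, ?_⟩
  · have : (2:ℝ) ^ (-δ) < 1 :=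
      Real.rpow_lt_one_of_one_lt_of_neg one_lt_two (by linarith)
    linarith
  · have : (0:ℝ) < (2:ℝ) ^ (-δ) := Real.rpow_pos_of_pos two_pos _
    linarith
  · rw [show (1 : ℝ) - (1 - (2:ℝ) ^ (-δ)) = (2:ℝ) ^ (-δ) by ring]
    exact Real.logb_rpow two_pos (by norm_num)

end Helpers

section Main

variable {Ω 𝒳 𝒴 : Type*} [Fintype 𝒳] [Nonempty 𝒳] [Fintype 𝒴] [Nonempty 𝒴]
    [MeasurableSpace 𝒳] [DiscreteMeasurableSpace 𝒳]
    [MeasurableSpace 𝒴] [DiscreteMeasurableSpace 𝒴]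
    [MeasurableSpace Ω] (μ : Measure Ω) [IsProbabilityMeasure μ]
    (X : Ω → 𝒳) (Y : Ω → 𝒴) (hX : Measurable X) (hY : Measurable Y)

private lemma sum_pY (hY : Measurable Y) :
    ∑ y : 𝒴, (μ {ω | Y ω = y}).toReal = 1 := by
  have h : ∑ y : 𝒴, μ {ω | Y ω = y} = 1 := by
    have := sum_measure_preimage_singleton (μ := μ) (Finset.univ : Finset 𝒴)
      (f := Y) (fun y _ => hY (measurableSet_singleton y))
    exact (by simpa using this : ∑ b, μ (Y ⁻¹' {b}) = 1)
  rw [← ENNReal.toReal_sum (fun y _ => (measure_ne_top μ _)), h, ENNReal.toReal_one]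

private lemma nonempty_V : Nonempty {f : Option 𝒳 → PMF 𝒴 | StrictlyPositive f} := by
  refine ⟨⟨fun _ => PMF.uniformOfFintype 𝒴, fun z y => ?_⟩⟩
  rw [PMF.uniformOfFintype_apply]
  exact ENNReal.inv_pos.2 (ENNReal.natCast_ne_top _)

private lemma null_eq (hY : Measurable Y) :
    nullVEntropy μ Y {f : Option 𝒳 → PMF 𝒴 | StrictlyPositive f} = shannonEntropy μ Y := by
  classical
  haveI := nonempty_V (𝒳 := 𝒳) (𝒴 := 𝒴)
  set pY : 𝒴 → ℝ := fun y => (μ {ω | Y ω = y}).toReal with hpYdef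
  have hp0 : ∀ y, 0 ≤ pY y := fun y => ENNReal.toReal_nonneg
  have hp1 : ∑ y, pY y = 1 := sum_pY μ Y hY
  have hH : shannonEntropy μ Y = ∑ y, pY y * (-Real.logb 2 (pY y)) := by
    simp [shannonEntropy, mul_neg, Finset.sum_neg_distrib, hpYdef]
  have hval : ∀ f : {f : Option 𝒳 → PMF 𝒴 | StrictlyPositive f},
      ∫ ω, -Real.logb 2 ((f.1 none) (Y ω)).toReal ∂μ
        = ∑ y, pY y * (-Real.logb 2 ((f.1 none y).toReal)) := by
    intro f
    exact integral_comp_fintype μ Y hY (fun y => -Real.logb 2 ((f.1 none) y).toReal)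
  rw [nullVEntropy]
  refine ciInf_eq_of_bounds _ _ (fun f => ?_) (fun δ hδ => ?_)
  · rw [hval f, hH]
    refine gibbs_aux pY _ hp0 hp1 (fun y => pos_toReal _ y (f.2 none y)) ?_
    exact le_of_eq (pmf_sum_toReal_eq_one _)
  · obtain ⟨ε, hε0, hε1, hεδ⟩ := eps_choice δ hδ
    refine ⟨⟨fun _ => mixPMF pY ε hp0 hp1 hε0 hε1,
      fun z y => mixPMF_pos pY ε hp0 hp1 hε0 hε1 y⟩, ?_⟩
    rw [hval _, hH]
    have hbound : ∀ y, pY y * (-Real.logb 2 (((mixPMF pY ε hp0 hp1 hε0 hε1) y).toReal))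
        ≤ pY y * (-Real.logb 2 (pY y)) + pY y * δ := by
      intro y
      rw [mixPMF_toReal]
      rcases eq_or_lt_of_le (hp0 y) with h | h
      · rw [← h]; simp
      · have hcard : (0:ℝ) < Fintype.card 𝒴 := by exact_mod_cast Fintype.card_pos
        have hmon : Real.logb 2 ((1 - ε) * pY y)
            ≤ Real.logb 2 ((1 - ε) * pY y + ε / Fintype.card 𝒴) :=
          Real.logb_le_logb_of_le one_lt_two
            (mul_pos (show (0:ℝ) < 1 - ε by linarith) h)
            (le_add_of_nonneg_right (div_nonneg hε0.le hcard.le))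
        have hsplit : Real.logb 2 ((1 - ε) * pY y)
            = Real.logb 2 (1 - ε) + Real.logb 2 (pY y) := by
          rw [Real.logb_mul (by linarith) h.ne']
        rw [hsplit, hεδ] at hmon
        nlinarith [mul_le_mul_of_nonneg_left hmon (hp0 y)]
    calc ∑ y, pY y * (-Real.logb 2 (((mixPMF pY ε hp0 hp1 hε0 hε1) y).toReal))
        ≤ ∑ y, (pY y * (-Real.logb 2 (pY y)) + pY y * δ) :=
          Finset.sum_le_sum fun y _ => hbound y
      _ = ∑ y, pY y * (-Real.logb 2 (pY y)) + δ := by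
          rw [Finset.sum_add_distrib, ← Finset.sum_mul, hp1, one_mul]

private lemma sum_pXY (hX : Measurable X) (hY : Measurable Y) (x : 𝒳) :
    ∑ y : 𝒴, (μ {ω | X ω = x ∧ Y ω = y}).toReal = (μ {ω | X ω = x}).toReal := by
  have h : ∑ y : 𝒴, μ {ω | X ω = x ∧ Y ω = y} = μ {ω | X ω = x} := by
    have hmeas : ∀ y : 𝒴, MeasurableSet {ω | X ω = x ∧ Y ω = y} := fun y =>
      (hX (measurableSet_singleton x)).inter (hY (measurableSet_singleton y))
    rw [← measure_biUnion_finset ?_ (fun y _ => hmeas y)]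
    · congr 1
      ext ω
      simp
    · intro y _ y' _ hne
      simp only [Function.onFun, Set.disjoint_left]
      rintro ω ⟨_, h1⟩ ⟨_, h2⟩
      exact hne (h1 ▸ h2 ▸ rfl)
  rw [← ENNReal.toReal_sum (fun y _ => (measure_ne_top μ _)), h]

private lemma cond_eq (hX : Measurable X) (hY : Measurable Y) :
    condVEntropy μ Y {f : Option 𝒳 → PMF 𝒴 | StrictlyPositive f} X
      = shannonCondEntropy μ X Y := by
  classical
  haveI := nonempty_V (𝒳 := 𝒳) (𝒴 := 𝒴)
  set pxy : 𝒳 → 𝒴 → ℝ := fun x y => (μ {ω | X ω = x ∧ Y ω = y}).toReal with hpxydef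
  set px : 𝒳 → ℝ := fun x => (μ {ω | X ω = x}).toReal with hpxdef
  have hpxy0 : ∀ x y, 0 ≤ pxy x y := fun x y => ENNReal.toReal_nonneg
  have hpx0 : ∀ x, 0 ≤ px x := fun x => ENNReal.toReal_nonneg
  have hmarg : ∀ x, ∑ y, pxy x y = px x := fun x => sum_pXY μ X Y hX hY x
  have hpx1 : ∑ x, px x = 1 := sum_pY μ X hX
  have hH : shannonCondEntropy μ X Y
      = ∑ x, ∑ y, pxy x y * (-Real.logb 2 (pxy x y / px x)) := by
    simp [shannonCondEntropy, mul_neg, Finset.sum_neg_distrib, hpxydef, hpxdef]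
  -- conditional distribution
  have hzero : ∀ x, px x = 0 → ∀ y, pxy x y = 0 := by
    intro x hx y
    have hle : μ {ω | X ω = x ∧ Y ω = y} ≤ μ {ω | X ω = x} :=
      measure_mono (fun ω hω => hω.1)
    have h0 : (μ {ω | X ω = x}) = 0 :=
      ((ENNReal.toReal_eq_zero_iff _).1 hx).resolve_right (measure_ne_top μ _)
    have h1 : μ {ω | X ω = x ∧ Y ω = y} = 0 := le_antisymm (h0 ▸ hle) (by simp)
    simp [hpxydef, h1]
  set condp : 𝒳 → 𝒴 → ℝ := fun x y =>
    if 0 < px x then pxy x y / px x else (Fintype.card 𝒴 : ℝ)⁻¹ with hcondpdef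
  have hcond0 : ∀ x y, 0 ≤ condp x y := by
    intro x y
    by_cases h : 0 < px x
    · simp only [hcondpdef, if_pos h]
      positivity
    · simp only [hcondpdef, if_neg h]
      positivity
  have hcond1 : ∀ x, ∑ y, condp x y = 1 := by
    intro x
    by_cases h : 0 < px x
    · simp only [hcondpdef, if_pos h]
      rw [← Finset.sum_div, hmarg x, div_self h.ne']
    · simp only [hcondpdef, if_neg h]
      rw [Finset.sum_const, Finset.card_univ, nsmul_eq_mul,
        mul_inv_cancel₀ (by exact_mod_cast Fintype.card_pos.ne')]
  have hval : ∀ f : {f : Option 𝒳 → PMF 𝒴 | StrictlyPositive f},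
      ∫ ω, -Real.logb 2 ((f.1 (some (X ω))) (Y ω)).toReal ∂μ
        = ∑ x, ∑ y, pxy x y * (-Real.logb 2 ((f.1 (some x) y).toReal)) := by
    intro f
    have := integral_comp_fintype μ (fun ω => (X ω, Y ω)) (hX.prodMk hY)
      (fun a => -Real.logb 2 ((f.1 (some a.1)) a.2).toReal)
    rw [this, Fintype.sum_prod_type]
    refine Finset.sum_congr rfl fun x _ => Finset.sum_congr rfl fun y _ => ?_
    have hset : {ω | (X ω, Y ω) = (x, y)} = {ω | X ω = x ∧ Y ω = y} := by
      ext ω; simp [Prod.ext_iff]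
    simp only [hset, hpxydef]
  rw [condVEntropy]
  refine ciInf_eq_of_bounds _ _ (fun f => ?_) (fun δ hδ => ?_)
  · rw [hval f, hH]
    refine Finset.sum_le_sum fun x _ => ?_
    by_cases h : 0 < px x
    · -- apply Gibbs to conditional distribution
      have key := gibbs_aux (fun y => pxy x y / px x)
        (fun y => ((f.1 (some x)) y).toReal)
        (fun y => by positivity)
        (by rw [← Finset.sum_div, hmarg x, div_self h.ne'])
        (fun y => pos_toReal _ y (f.2 (some x) y))
        (le_of_eq (pmf_sum_toReal_eq_one _))
      have e1 : ∀ y, pxy x y / px x * (-Real.logb 2 (pxy x y / px x)) * px x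
          = pxy x y * (-Real.logb 2 (pxy x y / px x)) := by
        intro y; field_simp
      have e2 : ∀ y, pxy x y / px x * (-Real.logb 2 (((f.1 (some x)) y).toReal)) * px x
          = pxy x y * (-Real.logb 2 (((f.1 (some x)) y).toReal)) := by
        intro y; field_simp
      have hkey2 := mul_le_mul_of_nonneg_right key (hpx0 x)
      calc ∑ y, pxy x y * (-Real.logb 2 (pxy x y / px x))
          = ∑ y, pxy x y / px x * (-Real.logb 2 (pxy x y / px x)) * px x := by
            exact Finset.sum_congr rfl fun y _ => (e1 y).symm
        _ = (∑ y, pxy x y / px x * (-Real.logb 2 (pxy x y / px x))) * px x := by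
            rw [Finset.sum_mul]
        _ ≤ (∑ y, pxy x y / px x * (-Real.logb 2 (((f.1 (some x)) y).toReal))) * px x := hkey2
        _ = ∑ y, pxy x y / px x * (-Real.logb 2 (((f.1 (some x)) y).toReal)) * px x := by
            rw [Finset.sum_mul]
        _ = ∑ y, pxy x y * (-Real.logb 2 (((f.1 (some x)) y).toReal)) :=
            Finset.sum_congr rfl fun y _ => e2 y
    · have hx0 : px x = 0 := le_antisymm (not_lt.1 h) (hpx0 x)
      have : ∀ y, pxy x y = 0 := hzero x hx0
      simp [this]
  · obtain ⟨ε, hε0, hε1, hεδ⟩ := eps_choice δ hδ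
    refine ⟨⟨fun z => match z with
      | none => PMF.uniformOfFintype 𝒴
      | some x => mixPMF (condp x) ε (hcond0 x) (hcond1 x) hε0 hε1, ?_⟩, ?_⟩
    · rintro (_ | x) y
      · rw [PMF.uniformOfFintype_apply]
        exact ENNReal.inv_pos.2 (ENNReal.natCast_ne_top _)
      · exact mixPMF_pos _ ε _ _ hε0 hε1 y
    · rw [hval _, hH]
      have hbound : ∀ x y,
          pxy x y * (-Real.logb 2 (((mixPMF (condp x) ε (hcond0 x) (hcond1 x) hε0 hε1) y).toReal))
          ≤ pxy x y * (-Real.logb 2 (pxy x y / px x)) + pxy x y * δ := by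
        intro x y
        rw [mixPMF_toReal]
        rcases eq_or_lt_of_le (hpxy0 x y) with h | h
        · rw [← h]; simp
        · have hx : 0 < px x := by
            rcases eq_or_lt_of_le (hpx0 x) with h' | h'
            · exact absurd (hzero x h'.symm y) h.ne'
            · exact h'
          have hcp : condp x y = pxy x y / px x := by
            simp only [hcondpdef, if_pos hx]
          have hcpos : 0 < condp x y := by rw [hcp]; positivity
          rw [hcp]
          have hcard : (0:ℝ) < Fintype.card 𝒴 := by exact_mod_cast Fintype.card_pos
          have hmon : Real.logb 2 ((1 - ε) * condp x y)
              ≤ Real.logb 2 ((1 - ε) * condp x y + ε / Fintype.card 𝒴) :=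
            Real.logb_le_logb_of_le one_lt_two
              (mul_pos (show (0:ℝ) < 1 - ε by linarith) hcpos)
              (le_add_of_nonneg_right (div_nonneg hε0.le hcard.le))
          have hsplit : Real.logb 2 ((1 - ε) * condp x y)
              = Real.logb 2 (1 - ε) + Real.logb 2 (condp x y) := by
            rw [Real.logb_mul (by linarith) hcpos.ne']
          rw [hcp] at hmon hsplit
          rw [hsplit, hεδ] at hmon
          nlinarith [mul_le_mul_of_nonneg_left hmon (hpxy0 x y)]
      calc ∑ x, ∑ y, pxy x y *
            (-Real.logb 2 (((mixPMF (condp x) ε (hcond0 x) (hcond1 x) hε0 hε1) y).toReal))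
          ≤ ∑ x, ∑ y, (pxy x y * (-Real.logb 2 (pxy x y / px x)) + pxy x y * δ) :=
            Finset.sum_le_sum fun x _ => Finset.sum_le_sum fun y _ => hbound x y
        _ = ∑ x, ∑ y, pxy x y * (-Real.logb 2 (pxy x y / px x)) + δ := by
            have h1 : ∑ x, ∑ y, pxy x y * δ = δ := by
              have h2 : ∀ x : 𝒳, ∑ y, pxy x y * δ = px x * δ := fun x => by
                rw [← Finset.sum_mul, hmarg x]
              simp only [h2]
              rw [← Finset.sum_mul, hpx1, one_mul]
            rw [Finset.sum_congr rfl (fun x _ => Finset.sum_add_distrib),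
              Finset.sum_add_distrib, h1]

end Main

/-- When `V` is the set of all strictly positive predictors, the `V`-information
reduces to the Shannon mutual information: `I_{V_all}(X → Y) = H(Y) - H(Y ∣ X) = I(X; Y)`. -/
theorem vinfo_all_eq_mutualInformation
    {Ω 𝒳 𝒴 : Type*} [Fintype 𝒳] [Nonempty 𝒳] [Fintype 𝒴] [Nonempty 𝒴]
    [MeasurableSpace 𝒳] [DiscreteMeasurableSpace 𝒳]
    [MeasurableSpace 𝒴] [DiscreteMeasurableSpace 𝒴]
    [MeasurableSpace Ω] (μ : Measure Ω) [IsProbabilityMeasure μ]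
    (X : Ω → 𝒳) (Y : Ω → 𝒴) (hX : Measurable X) (hY : Measurable Y) :
    VInfo μ Y {f : Option 𝒳 → PMF 𝒴 | StrictlyPositive f} X =
      shannonEntropy μ Y - shannonCondEntropy μ X Y := by
  rw [VInfo, null_eq μ Y hY, cond_eq μ X Y hX hY]
end

section
/- Let V_all be the set of all strictly positive predictors and let T be a nonempty set of maps τ : 𝒳 → 𝒳. For τ* ∈ T, τ* maximizes τ ↦ I_{V_all}(τ ∘ X → Y) over T if and only if τ* maximizes τ ↦ I(τ ∘ X; Y) over T, where I(τ ∘ X; Y) = H(Y) - H(Y ∣ τ ∘ X) is the Shannon mutual information between τ(X) and Y. (When the receiver's predictive family is unrestricted, unconstrained mecha-nudging design reduces to the classical log-scoring Bayesian persuasion objective of maximizing mutual information.) -/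
open MeasureTheory
open scoped ENNReal

lemma mn_pmf_sum_toReal {𝒴 : Type*} [Fintype 𝒴] (q : PMF 𝒴) :
    ∑ y, (q y).toReal = 1 := by
  have h := q.tsum_coe
  rw [tsum_fintype] at h
  rw [← ENNReal.toReal_sum (fun y _ => q.apply_ne_top y), h, ENNReal.toReal_one]

lemma mn_integral_comp {Ω α : Type*} [MeasurableSpace Ω] [Fintype α] [MeasurableSpace α]
    [MeasurableSingletonClass α] (μ : Measure Ω) [IsFiniteMeasure μ]
    {W : Ω → α} (hW : Measurable W) (g : α → ℝ) :
    ∫ ω, g (W ω) ∂μ = ∑ a, (μ {ω | W ω = a}).toReal * g a := by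
  rw [← integral_map hW.aemeasurable (measurable_of_countable g).aestronglyMeasurable]
  rw [integral_fintype Integrable.of_finite]; simp only [Measure.real, smul_eq_mul]
  refine Finset.sum_congr rfl fun a _ => ?_
  rw [Measure.map_apply hW (measurableSet_singleton a)]
  rfl

lemma mn_fiber {Ω α : Type*} [MeasurableSpace Ω] [Fintype α] [MeasurableSpace α]
    [MeasurableSingletonClass α] (μ : Measure Ω) {W : Ω → α} (hW : Measurable W)
    (s : Set Ω) (hs : MeasurableSet s) :
    ∑ a, μ (s ∩ {ω | W ω = a}) = μ s := by
  have h1 : s = ⋃ a, s ∩ {ω | W ω = a} := by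
    ext ω; simp
  rw [← tsum_fintype (L := SummationFilter.unconditional _)]
  conv_rhs => rw [h1]
  refine (measure_iUnion ?_ (fun a => hs.inter (hW (measurableSet_singleton a)))).symm
  intro a b hab
  rw [Function.onFun, Set.disjoint_left]
  rintro ω ⟨-, ha⟩ ⟨-, hb⟩
  exact hab ((Set.mem_setOf_eq ▸ ha) ▸ (Set.mem_setOf_eq ▸ hb) ▸ rfl)

lemma mn_logb_le (s p q : ℝ) (hs : 0 ≤ s) (hp : 0 ≤ p) (hps : p ≤ s) (hq : 0 < q) :
    p * Real.logb 2 q - p * Real.logb 2 (p / s) ≤ (q * s - p) / Real.log 2 := by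
  have h2 : (0:ℝ) < Real.log 2 := Real.log_pos one_lt_two
  rcases eq_or_lt_of_le hp with h | h
  · rw [← h]
    simp only [zero_mul, sub_zero, sub_self]
    positivity
  · have hs' : 0 < s := lt_of_lt_of_le h hps
    have hkey : p * Real.log (q * s / p) ≤ q * s - p := by
      have hlog := Real.log_le_sub_one_of_pos (show (0:ℝ) < q * s / p by positivity)
      have := mul_le_mul_of_nonneg_left hlog hp
      calc p * Real.log (q * s / p) ≤ p * (q * s / p - 1) := this
        _ = q * s - p := by field_simp
    have hexp : Real.log (q * s / p) = Real.log q - Real.log (p / s) := by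
      rw [Real.log_div (by positivity) (ne_of_gt h), Real.log_mul (ne_of_gt hq) (ne_of_gt hs'),
        Real.log_div (ne_of_gt h) (ne_of_gt hs')]
      ring
    rw [hexp, mul_sub] at hkey
    rw [Real.logb, Real.logb, ← mul_div_assoc, ← mul_div_assoc, div_sub_div_same,
      div_le_div_iff_of_pos_right h2]
    linarith

lemma mn_gibbs {𝒴 : Type*} [Fintype 𝒴] (p q : 𝒴 → ℝ) (hp : ∀ y, 0 ≤ p y)
    (hq : ∀ y, 0 < q y) (hq1 : ∑ y, q y = 1) :
    ∑ y, p y * (-Real.logb 2 (p y / ∑ z, p z)) ≤ ∑ y, p y * (-Real.logb 2 (q y)) := by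
  set s := ∑ z, p z with hs
  have hs0 : 0 ≤ s := Finset.sum_nonneg fun z _ => hp z
  have h1 : ∑ y, (p y * Real.logb 2 (q y) - p y * Real.logb 2 (p y / s))
      ≤ ∑ y, (q y * s - p y) / Real.log 2 :=
    Finset.sum_le_sum fun y _ => mn_logb_le s (p y) (q y) hs0 (hp y)
      (Finset.single_le_sum (fun z _ => hp z) (Finset.mem_univ y)) (hq y)
  have h2 : ∑ y, (q y * s - p y) / Real.log 2 = 0 := by
    rw [← Finset.sum_div, Finset.sum_sub_distrib, ← Finset.sum_mul, hq1, one_mul, ← hs,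
      sub_self, zero_div]
  rw [Finset.sum_sub_distrib] at h1
  simp only [mul_neg]
  rw [Finset.sum_neg_distrib, Finset.sum_neg_distrib, neg_le_neg_iff]
  linarith

noncomputable def mnMix {𝒴 : Type*} [Fintype 𝒴] [Nonempty 𝒴] (r : 𝒴 → ℝ≥0∞)
    (hr : ∑ y, r y = 1) (c : ℝ≥0∞) (hc : c ≤ 1) : PMF 𝒴 :=
  PMF.ofFintype (fun y => c * r y + (1 - c) * (Fintype.card 𝒴 : ℝ≥0∞)⁻¹) (by
    have hcard : ((Fintype.card 𝒴 : ℝ≥0∞)) ≠ 0 := by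
      simp [Fintype.card_ne_zero]
    rw [Finset.sum_add_distrib, ← Finset.mul_sum, hr, mul_one, Finset.sum_const,
      Finset.card_univ, nsmul_eq_mul, mul_comm ((Fintype.card 𝒴 : ℝ≥0∞)) _, mul_assoc,
      ENNReal.inv_mul_cancel hcard (ENNReal.natCast_ne_top _),
      mul_one, add_tsub_cancel_of_le hc])

lemma mnMix_apply {𝒴 : Type*} [Fintype 𝒴] [Nonempty 𝒴] (r : 𝒴 → ℝ≥0∞)
    (hr : ∑ y, r y = 1) (c : ℝ≥0∞) (hc : c ≤ 1) (y : 𝒴) :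
    (mnMix r hr c hc) y = c * r y + (1 - c) * (Fintype.card 𝒴 : ℝ≥0∞)⁻¹ :=
  PMF.ofFintype_apply _ _

lemma mnMix_pos {𝒴 : Type*} [Fintype 𝒴] [Nonempty 𝒴] (r : 𝒴 → ℝ≥0∞)
    (hr : ∑ y, r y = 1) (c : ℝ≥0∞) (hc : c ≤ 1) (hc1 : c < 1) (y : 𝒴) :
    0 < (mnMix r hr c hc) y := by
  rw [mnMix_apply]
  have h1 : (0:ℝ≥0∞) < (1 - c) * (Fintype.card 𝒴 : ℝ≥0∞)⁻¹ := by
    apply ENNReal.mul_pos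
    · exact ne_of_gt (tsub_pos_of_lt hc1)
    · simp [ENNReal.inv_ne_zero, ENNReal.natCast_ne_top]
  exact lt_of_lt_of_le h1 le_add_self

lemma mn_unif_sum {𝒴 : Type*} [Fintype 𝒴] [Nonempty 𝒴] :
    ∑ _y : 𝒴, (Fintype.card 𝒴 : ℝ≥0∞)⁻¹ = 1 := by
  rw [Finset.sum_const, Finset.card_univ, nsmul_eq_mul,
    ENNReal.mul_inv_cancel (by simp [Fintype.card_ne_zero]) (ENNReal.natCast_ne_top _)]


lemma mn_cond_eq {Ω 𝒳 𝒴 : Type*} [Fintype 𝒳] [Nonempty 𝒳] [Fintype 𝒴] [Nonempty 𝒴]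
    [MeasurableSpace 𝒳] [DiscreteMeasurableSpace 𝒳]
    [MeasurableSpace 𝒴] [DiscreteMeasurableSpace 𝒴]
    [MeasurableSpace Ω] (μ : Measure Ω) [IsProbabilityMeasure μ]
    (Y : Ω → 𝒴) (hY : Measurable Y) (Z : Ω → 𝒳) (hZ : Measurable Z) :
    condVEntropy μ Y {f : Option 𝒳 → PMF 𝒴 | StrictlyPositive f} Z
      = shannonCondEntropy μ Z Y := by
  classical
  set V := {f : Option 𝒳 → PMF 𝒴 | StrictlyPositive f} with hV
  set P : 𝒳 → 𝒴 → ℝ := fun x y => (μ {ω | Z ω = x ∧ Y ω = y}).toReal with hP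
  have hPnn : ∀ x y, 0 ≤ P x y := fun x y => ENNReal.toReal_nonneg
  -- fiber identities
  have hfibE : ∀ x, ∑ y, μ {ω | Z ω = x ∧ Y ω = y} = μ {ω | Z ω = x} := by
    intro x
    have := mn_fiber μ hY {ω | Z ω = x} (hZ (measurableSet_singleton x))
    simpa [Set.inter_def] using this
  have hfib : ∀ x, ∑ y, P x y = (μ {ω | Z ω = x}).toReal := by
    intro x
    rw [hP]
    rw [← ENNReal.toReal_sum (fun y _ => measure_ne_top μ _), hfibE x]
  have hPx1 : ∑ x, (μ {ω | Z ω = x}).toReal = 1 := by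
    have := mn_fiber μ hZ Set.univ MeasurableSet.univ
    simp only [Set.univ_inter] at this
    rw [← ENNReal.toReal_sum (fun x _ => measure_ne_top μ _), this, measure_univ,
      ENNReal.toReal_one]
  -- integral formula
  have hint : ∀ f : Option 𝒳 → PMF 𝒴,
      (∫ ω, -Real.logb 2 ((f (some (Z ω))) (Y ω)).toReal ∂μ)
        = ∑ x, ∑ y, P x y * (-Real.logb 2 ((f (some x)) y).toReal) := by
    intro f
    have h := mn_integral_comp μ (hZ.prodMk hY)
      (fun a : 𝒳 × 𝒴 => -Real.logb 2 ((f (some a.1)) a.2).toReal)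
    rw [show (∫ ω, -Real.logb 2 ((f (some (Z ω))) (Y ω)).toReal ∂μ)
        = ∫ ω, (fun a : 𝒳 × 𝒴 => -Real.logb 2 ((f (some a.1)) a.2).toReal) ((Z ω, Y ω)) ∂μ
      from rfl, h, Fintype.sum_prod_type]
    refine Finset.sum_congr rfl fun x _ => Finset.sum_congr rfl fun y _ => ?_
    have hset : {ω | (Z ω, Y ω) = (x, y)} = {ω | Z ω = x ∧ Y ω = y} := by
      ext ω; simp [Prod.ext_iff]
    rw [hset]
  -- Shannon conditional entropy in sum form
  have hH : shannonCondEntropy μ Z Y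
      = ∑ x, ∑ y, P x y * (-Real.logb 2 (P x y / ∑ y', P x y')) := by
    rw [shannonCondEntropy, ← Finset.sum_neg_distrib]
    refine Finset.sum_congr rfl fun x _ => ?_
    rw [← Finset.sum_neg_distrib]
    refine Finset.sum_congr rfl fun y _ => ?_
    rw [hfib x]
    ring
  -- nonemptiness of V
  have hunif : (fun _ : Option 𝒳 => PMF.uniformOfFintype 𝒴) ∈ V := by
    intro z y
    rw [PMF.uniformOfFintype_apply]
    exact ENNReal.inv_pos.mpr (ENNReal.natCast_ne_top _)
  haveI : Nonempty V := ⟨⟨_, hunif⟩⟩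
  -- lower bound
  have hq_pos : ∀ (f : V) (x : 𝒳) (y : 𝒴), 0 < ((f.1 (some x)) y).toReal := fun f x y =>
    ENNReal.toReal_pos (ne_of_gt (f.2 (some x) y)) (PMF.apply_ne_top _ y)
  have hlb : ∀ f : V, shannonCondEntropy μ Z Y
      ≤ ∑ x, ∑ y, P x y * (-Real.logb 2 ((f.1 (some x)) y).toReal) := by
    intro f
    rw [hH]
    refine Finset.sum_le_sum fun x _ => ?_
    exact mn_gibbs (fun y => P x y) (fun y => ((f.1 (some x)) y).toReal)
      (hPnn x) (hq_pos f x) (mn_pmf_sum_toReal _)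
  have hcond : condVEntropy μ Y V Z
      = ⨅ f : V, ∑ x, ∑ y, P x y * (-Real.logb 2 ((f.1 (some x)) y).toReal) :=
    iInf_congr fun f => hint f.1
  rw [hcond]
  have hbdd : BddBelow (Set.range fun f : V =>
      ∑ x, ∑ y, P x y * (-Real.logb 2 ((f.1 (some x)) y).toReal)) := by
    refine ⟨shannonCondEntropy μ Z Y, ?_⟩
    rintro v ⟨f, rfl⟩
    exact hlb f
  refine le_antisymm ?_ (le_ciInf hlb)
  -- upper bound
  refine le_of_forall_pos_le_add fun ε hε => ?_
  set c : ℝ≥0∞ := ENNReal.ofReal ((2:ℝ) ^ (-ε)) with hc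
  have hrp0 : (0:ℝ) < (2:ℝ) ^ (-ε) := Real.rpow_pos_of_pos two_pos _
  have hrp1 : (2:ℝ) ^ (-ε) < 1 :=
    Real.rpow_lt_one_of_one_lt_of_neg one_lt_two (by linarith)
  have hc1 : c < 1 := ENNReal.ofReal_lt_one.mpr hrp1
  have hcle : c ≤ 1 := le_of_lt hc1
  have hctr : c.toReal = (2:ℝ) ^ (-ε) := ENNReal.toReal_ofReal hrp0.le
  set r : 𝒳 → 𝒴 → ℝ≥0∞ := fun x y =>
    if μ {ω | Z ω = x} = 0 then (Fintype.card 𝒴 : ℝ≥0∞)⁻¹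
    else μ {ω | Z ω = x ∧ Y ω = y} / μ {ω | Z ω = x} with hr_def
  have hr : ∀ x, ∑ y, r x y = 1 := by
    intro x
    by_cases h : μ {ω | Z ω = x} = 0
    · simp only [hr_def, if_pos h]
      exact mn_unif_sum
    · simp only [hr_def, if_neg h, div_eq_mul_inv, ← Finset.sum_mul]
      rw [hfibE x, ← div_eq_mul_inv, ENNReal.div_self h (measure_ne_top μ _)]
  have hmarg : ∑ y, μ {ω | Y ω = y} = 1 := by
    have := mn_fiber μ hY Set.univ MeasurableSet.univ
    simpa using this
  set f₀ : Option 𝒳 → PMF 𝒴 := fun z =>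
    Option.rec (mnMix (fun y => μ {ω | Y ω = y}) hmarg c hcle)
      (fun x => mnMix (r x) (hr x) c hcle) z with hf₀def
  have hf₀ : f₀ ∈ V := by
    intro z y
    cases z <;> exact mnMix_pos _ _ _ _ hc1 y
  refine le_trans (ciInf_le hbdd ⟨f₀, hf₀⟩) ?_
  -- termwise bound
  have hterm : ∀ x y, P x y * (-Real.logb 2 ((f₀ (some x)) y).toReal)
      ≤ P x y * (ε + (-Real.logb 2 (P x y / ∑ y', P x y'))) := by
    intro x y
    by_cases hPz : μ {ω | Z ω = x ∧ Y ω = y} = 0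
    · have : P x y = 0 := by rw [hP]; simp [hPz]
      rw [this]; simp
    · have hsub : {ω | Z ω = x ∧ Y ω = y} ⊆ {ω | Z ω = x} := fun ω hω => hω.1
      have hPxz : μ {ω | Z ω = x} ≠ 0 := fun h => hPz (measure_mono_null hsub h)
      have hq_le : c * r x y ≤ (f₀ (some x)) y := by
        rw [show f₀ (some x) = mnMix (r x) (hr x) c hcle from rfl, mnMix_apply]
        exact le_add_of_nonneg_right zero_le
      have hqne : ((f₀ (some x)) y) ≠ ⊤ := PMF.apply_ne_top _ y
      have htr : ((c * r x y).toReal) ≤ ((f₀ (some x)) y).toReal :=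
        ENNReal.toReal_mono hqne hq_le
      have hrval : r x y = μ {ω | Z ω = x ∧ Y ω = y} / μ {ω | Z ω = x} := by
        rw [hr_def]; simp [hPxz]
      have hcr : (c * r x y).toReal = (2:ℝ) ^ (-ε) * (P x y / (μ {ω | Z ω = x}).toReal) := by
        rw [ENNReal.toReal_mul, hctr, hrval, ENNReal.toReal_div, hP]
      have hPpos : 0 < P x y := ENNReal.toReal_pos hPz (measure_ne_top μ _)
      have hPxpos : 0 < (μ {ω | Z ω = x}).toReal :=
        ENNReal.toReal_pos hPxz (measure_ne_top μ _)
      have hratio : 0 < P x y / (μ {ω | Z ω = x}).toReal := by positivity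
      have hlogle : Real.logb 2 ((2:ℝ) ^ (-ε) * (P x y / (μ {ω | Z ω = x}).toReal))
          ≤ Real.logb 2 ((f₀ (some x)) y).toReal := by
        apply Real.logb_le_logb_of_le one_lt_two (by positivity)
        rw [← hcr]; exact htr
      have hsplit : Real.logb 2 ((2:ℝ) ^ (-ε) * (P x y / (μ {ω | Z ω = x}).toReal))
          = -ε + Real.logb 2 (P x y / (μ {ω | Z ω = x}).toReal) := by
        rw [Real.logb_mul (ne_of_gt hrp0) (ne_of_gt hratio),
          Real.logb_rpow (by norm_num) (by norm_num)]
      have : -Real.logb 2 ((f₀ (some x)) y).toReal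
          ≤ ε + (-Real.logb 2 (P x y / (μ {ω | Z ω = x}).toReal)) := by
        rw [hsplit] at hlogle; linarith
      have := mul_le_mul_of_nonneg_left this (hPnn x y)
      rw [hfib x]
      exact this
  calc ∑ x, ∑ y, P x y * (-Real.logb 2 ((f₀ (some x)) y).toReal)
      ≤ ∑ x, ∑ y, P x y * (ε + (-Real.logb 2 (P x y / ∑ y', P x y'))) :=
        Finset.sum_le_sum fun x _ => Finset.sum_le_sum fun y _ => hterm x y
    _ = shannonCondEntropy μ Z Y + ε := by
        rw [hH]
        simp only [mul_add, Finset.sum_add_distrib]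
        have h2 : ∑ x, ∑ y, P x y * ε = ε := by
          simp only [← Finset.sum_mul, hfib, hPx1, one_mul]
        rw [h2, add_comm]

lemma mn_null_eq {Ω 𝒳 𝒴 : Type*} [Fintype 𝒴] [Nonempty 𝒴]
    [MeasurableSpace 𝒴] [DiscreteMeasurableSpace 𝒴]
    [MeasurableSpace Ω] (μ : Measure Ω) [IsProbabilityMeasure μ]
    (Y : Ω → 𝒴) (hY : Measurable Y) :
    nullVEntropy μ Y {f : Option 𝒳 → PMF 𝒴 | StrictlyPositive f}
      = shannonEntropy μ Y := by
  classical
  set V := {f : Option 𝒳 → PMF 𝒴 | StrictlyPositive f} with hV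
  set P : 𝒴 → ℝ := fun y => (μ {ω | Y ω = y}).toReal with hP
  have hPnn : ∀ y, 0 ≤ P y := fun y => ENNReal.toReal_nonneg
  have hmargE : ∑ y, μ {ω | Y ω = y} = 1 := by
    have := mn_fiber μ hY Set.univ MeasurableSet.univ
    simpa using this
  have hfib : ∑ y, P y = 1 := by
    rw [hP, ← ENNReal.toReal_sum (fun y _ => measure_ne_top μ _), hmargE, ENNReal.toReal_one]
  have hint : ∀ f : Option 𝒳 → PMF 𝒴,
      (∫ ω, -Real.logb 2 ((f none) (Y ω)).toReal ∂μ)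
        = ∑ y, P y * (-Real.logb 2 ((f none) y).toReal) := by
    intro f
    exact mn_integral_comp μ hY (fun y : 𝒴 => -Real.logb 2 ((f none) y).toReal)
  have hH : shannonEntropy μ Y = ∑ y, P y * (-Real.logb 2 (P y / ∑ z, P z)) := by
    rw [shannonEntropy, ← Finset.sum_neg_distrib]
    refine Finset.sum_congr rfl fun y _ => ?_
    rw [hfib, div_one]
    ring
  have hunif : (fun _ : Option 𝒳 => PMF.uniformOfFintype 𝒴) ∈ V := by
    intro z y
    rw [PMF.uniformOfFintype_apply]
    exact ENNReal.inv_pos.mpr (ENNReal.natCast_ne_top _)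
  haveI : Nonempty V := ⟨⟨_, hunif⟩⟩
  have hq_pos : ∀ (f : V) (y : 𝒴), 0 < ((f.1 none) y).toReal := fun f y =>
    ENNReal.toReal_pos (ne_of_gt (f.2 none y)) (PMF.apply_ne_top _ y)
  have hlb : ∀ f : V, shannonEntropy μ Y
      ≤ ∑ y, P y * (-Real.logb 2 ((f.1 none) y).toReal) := by
    intro f
    rw [hH]
    exact mn_gibbs P (fun y => ((f.1 none) y).toReal) hPnn (hq_pos f) (mn_pmf_sum_toReal _)
  have hcond : nullVEntropy μ Y V
      = ⨅ f : V, ∑ y, P y * (-Real.logb 2 ((f.1 none) y).toReal) :=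
    iInf_congr fun f => hint f.1
  rw [hcond]
  have hbdd : BddBelow (Set.range fun f : V =>
      ∑ y, P y * (-Real.logb 2 ((f.1 none) y).toReal)) := by
    refine ⟨shannonEntropy μ Y, ?_⟩
    rintro v ⟨f, rfl⟩
    exact hlb f
  refine le_antisymm ?_ (le_ciInf hlb)
  refine le_of_forall_pos_le_add fun ε hε => ?_
  set c : ℝ≥0∞ := ENNReal.ofReal ((2:ℝ) ^ (-ε)) with hc
  have hrp0 : (0:ℝ) < (2:ℝ) ^ (-ε) := Real.rpow_pos_of_pos two_pos _
  have hrp1 : (2:ℝ) ^ (-ε) < 1 :=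
    Real.rpow_lt_one_of_one_lt_of_neg one_lt_two (by linarith)
  have hc1 : c < 1 := ENNReal.ofReal_lt_one.mpr hrp1
  have hcle : c ≤ 1 := le_of_lt hc1
  have hctr : c.toReal = (2:ℝ) ^ (-ε) := ENNReal.toReal_ofReal hrp0.le
  set f₀ : Option 𝒳 → PMF 𝒴 := fun _ => mnMix (fun y => μ {ω | Y ω = y}) hmargE c hcle
    with hf₀def
  have hf₀ : f₀ ∈ V := by
    intro z y
    exact mnMix_pos _ _ _ _ hc1 y
  refine le_trans (ciInf_le hbdd ⟨f₀, hf₀⟩) ?_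
  have hterm : ∀ y, P y * (-Real.logb 2 ((f₀ none) y).toReal)
      ≤ P y * (ε + (-Real.logb 2 (P y / ∑ z, P z))) := by
    intro y
    rw [hfib, div_one]
    by_cases hPz : μ {ω | Y ω = y} = 0
    · have : P y = 0 := by rw [hP]; simp [hPz]
      rw [this]; simp
    · have hq_le : c * μ {ω | Y ω = y} ≤ (f₀ none) y := by
        rw [show f₀ none = mnMix (fun y => μ {ω | Y ω = y}) hmargE c hcle from rfl, mnMix_apply]
        exact le_add_of_nonneg_right zero_le
      have hqne : ((f₀ none) y) ≠ ⊤ := PMF.apply_ne_top _ y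
      have htr : ((c * μ {ω | Y ω = y}).toReal) ≤ ((f₀ none) y).toReal :=
        ENNReal.toReal_mono hqne hq_le
      have hcr : (c * μ {ω | Y ω = y}).toReal = (2:ℝ) ^ (-ε) * P y := by
        rw [ENNReal.toReal_mul, hctr, hP]
      have hPpos : 0 < P y := ENNReal.toReal_pos hPz (measure_ne_top μ _)
      have hlogle : Real.logb 2 ((2:ℝ) ^ (-ε) * P y)
          ≤ Real.logb 2 ((f₀ none) y).toReal := by
        apply Real.logb_le_logb_of_le one_lt_two (by positivity)
        rw [← hcr]; exact htr
      have hsplit : Real.logb 2 ((2:ℝ) ^ (-ε) * P y)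
          = -ε + Real.logb 2 (P y) := by
        rw [Real.logb_mul (ne_of_gt hrp0) (ne_of_gt hPpos),
          Real.logb_rpow (by norm_num) (by norm_num)]
      have hkey : -Real.logb 2 ((f₀ none) y).toReal ≤ ε + (-Real.logb 2 (P y)) := by
        rw [hsplit] at hlogle; linarith
      exact mul_le_mul_of_nonneg_left hkey (hPnn y)
  calc ∑ y, P y * (-Real.logb 2 ((f₀ none) y).toReal)
      ≤ ∑ y, P y * (ε + (-Real.logb 2 (P y / ∑ z, P z))) := Finset.sum_le_sum fun y _ => hterm y
    _ = shannonEntropy μ Y + ε := by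
        rw [hH]
        simp only [mul_add, Finset.sum_add_distrib]
        have h2 : ∑ y, P y * ε = ε := by
          rw [← Finset.sum_mul, hfib, one_mul]
        rw [h2, add_comm]

/-- With an unrestricted receiver (the family of all strictly positive predictors),
unconstrained mecha-nudging design reduces to the classical log-scoring Bayesian
persuasion objective: `τ*` maximizes `τ ↦ I_{V_all}(τ ∘ X → Y)` over `T` iff it
maximizes the Shannon mutual information `τ ↦ I(τ ∘ X; Y) = H(Y) - H(Y ∣ τ ∘ X)`. -/
theorem vinfo_all_argmax_iff_mutualInformation_argmax
    {Ω 𝒳 𝒴 : Type*} [Fintype 𝒳] [Nonempty 𝒳] [Fintype 𝒴] [Nonempty 𝒴]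
    [MeasurableSpace 𝒳] [DiscreteMeasurableSpace 𝒳]
    [MeasurableSpace 𝒴] [DiscreteMeasurableSpace 𝒴]
    [MeasurableSpace Ω] (μ : Measure Ω) [IsProbabilityMeasure μ]
    (X : Ω → 𝒳) (Y : Ω → 𝒴) (hX : Measurable X) (hY : Measurable Y)
    (T : Set (𝒳 → 𝒳)) (hT : T.Nonempty)
    (τstar : 𝒳 → 𝒳) (hτstar : τstar ∈ T) :
    (∀ τ ∈ T, VInfo μ Y {f : Option 𝒳 → PMF 𝒴 | StrictlyPositive f} (τ ∘ X) ≤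
              VInfo μ Y {f : Option 𝒳 → PMF 𝒴 | StrictlyPositive f} (τstar ∘ X)) ↔
    (∀ τ ∈ T, shannonEntropy μ Y - shannonCondEntropy μ (τ ∘ X) Y ≤
              shannonEntropy μ Y - shannonCondEntropy μ (τstar ∘ X) Y) := by
  have heq : ∀ τ : 𝒳 → 𝒳,
      VInfo μ Y {f : Option 𝒳 → PMF 𝒴 | StrictlyPositive f} (τ ∘ X)
        = shannonEntropy μ Y - shannonCondEntropy μ (τ ∘ X) Y := by
    intro τ
    rw [VInfo, mn_null_eq μ Y hY,
      mn_cond_eq μ Y hY (τ ∘ X) ((measurable_of_countable τ).comp hX)]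
  simp only [heq]
end

section
/- Suppose the nonempty set V of strictly positive predictors satisfies optional ignorance: for every f ∈ V and every z : Option 𝒳, there exists f' ∈ V with f' w = f z for all w : Option 𝒳 (i.e. the constant predictor outputting the distribution f z is in V). Then H_V(Y ∣ X) ≤ H_V(Y), and consequently the V-usable information is nonnegative: I_V(X → Y) ≥ 0. -/
open MeasureTheory

/-- Under optional ignorance (every output distribution reachable by some `f ∈ V`
can also be produced by a constant predictor in `V`), the conditional `V`-entropy
is at most the `V`-entropy, and hence the `V`-usable information is nonnegative. -/
theorem vinfo_nonneg_of_optionalIgnorance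
    {Ω 𝒳 𝒴 : Type*} [Fintype 𝒳] [Nonempty 𝒳] [Fintype 𝒴] [Nonempty 𝒴]
    [MeasurableSpace 𝒳] [DiscreteMeasurableSpace 𝒳]
    [MeasurableSpace 𝒴] [DiscreteMeasurableSpace 𝒴]
    [MeasurableSpace Ω] (μ : Measure Ω) [IsProbabilityMeasure μ]
    (X : Ω → 𝒳) (Y : Ω → 𝒴) (hX : Measurable X) (hY : Measurable Y)
    (V : Set (Option 𝒳 → PMF 𝒴)) (hV : V.Nonempty)
    (hVpos : ∀ f ∈ V, StrictlyPositive f)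
    (hOI : ∀ f ∈ V, ∀ z : Option 𝒳, ∃ f' ∈ V, ∀ w : Option 𝒳, f' w = f z) :
    condVEntropy μ Y V X ≤ nullVEntropy μ Y V ∧ 0 ≤ VInfo μ Y V X := by
  have hnn : ∀ (g : Option 𝒳 → PMF 𝒴) (z : Option 𝒳) (y : 𝒴),
      0 ≤ -Real.logb 2 ((g z) y).toReal := by
    intro g z y
    have h1 : ((g z) y).toReal ≤ 1 := by
      have := ENNReal.toReal_mono (by simp) ((g z).coe_le_one y)
      simpa using this
    have := Real.logb_nonpos (b := 2) one_lt_two ENNReal.toReal_nonneg h1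
    linarith
  have bdd : BddBelow (Set.range fun f : V =>
      ∫ ω, -Real.logb 2 ((f.1 (some (X ω))) (Y ω)).toReal ∂μ) := by
    refine ⟨0, ?_⟩
    rintro _ ⟨f, rfl⟩
    exact integral_nonneg fun ω => hnn f.1 _ _
  haveI : Nonempty V := hV.to_subtype
  have hmain : condVEntropy μ Y V X ≤ nullVEntropy μ Y V := by
    apply le_ciInf
    intro f
    obtain ⟨f', hf'V, hf'⟩ := hOI f.1 f.2 none
    have : condVEntropy μ Y V X ≤
        ∫ ω, -Real.logb 2 ((f' (some (X ω))) (Y ω)).toReal ∂μ :=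
      ciInf_le bdd ⟨f', hf'V⟩
    calc condVEntropy μ Y V X ≤
        ∫ ω, -Real.logb 2 ((f' (some (X ω))) (Y ω)).toReal ∂μ := this
      _ = ∫ ω, -Real.logb 2 ((f.1 none) (Y ω)).toReal ∂μ := by
          congr 1; funext ω; rw [hf' (some (X ω))]
  exact ⟨hmain, sub_nonneg.mpr hmain⟩
end
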